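/- arXiv:2307.11257 — 2 statements merged into one kernel-verified Lean document; each statement's English description precedes it below -/
import Mathlib

section
/- Let p_0 > 1/2 and f(θ) = p_0 exp(−T²(θ − λ_0)²/2) + g(θ) with 0 ≤ g(θ) ≤ (1 − p_0) exp(−T²Δ²/8) for all θ with |θ − λ_0| ≤ Δ/2. Suppose θ* ∈ [λ_0 − Δ/2, λ_0 + Δ/2] satisfies f(θ*) + e₁ ≥ f(λ_0) − e₂ where e₁, e₂ ≥ 0. Then exp(−T²(θ* − λ_0)²/2) ≥ 1 − ((1−p_0)exp(−T²Δ²/8) + e₁ + e₂)/p_0, and hence |θ* − λ_0| ≤ (1/T)·√(2·((1−p_0)exp(−T²Δ²/8) + e₁ + e₂)/p_0 · (1 + o)) for appropriate bounds, provided the right-hand side quantity is at most 1/2. -/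
/-- Stability of the approximate maximizer: if `f(θ) = p₀ e^{-T²(θ-lam0)²/2} + g(θ)` with
`0 ≤ g ≤ (1-p₀) e^{-T²Δ²/8}` near `lam0`, and `θ* ∈ [lam0 - Δ/2, lam0 + Δ/2]` is near-optimal in
the sense that `f(θ*) + e₁ ≥ f(lam0) - e₂`, then setting
`D = ((1-p₀) e^{-T²Δ²/8} + e₁ + e₂)/p₀` one has `e^{-T²(θ*-lam0)²/2} ≥ 1 - D`, and if
moreover `D ≤ 1/2` then `|θ* - lam0| ≤ (1/T)√(2 D (1 + 1))`. -/
theorem stmt_11 (p₀ T Δ lam0 e₁ e₂ θstar D : ℝ) (g : ℝ → ℝ)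
    (hp₀ : 1 / 2 < p₀) (hT : 0 < T) (hΔ : 0 < Δ)
    (hg : ∀ θ, |θ - lam0| ≤ Δ / 2 →
      0 ≤ g θ ∧ g θ ≤ (1 - p₀) * Real.exp (-(T ^ 2 * Δ ^ 2) / 8))
    (he₁ : 0 ≤ e₁) (he₂ : 0 ≤ e₂)
    (hθ : θstar ∈ Set.Icc (lam0 - Δ / 2) (lam0 + Δ / 2))
    (hnear : p₀ * Real.exp (-(T ^ 2 * (lam0 - lam0) ^ 2) / 2) + g lam0 - e₂
      ≤ p₀ * Real.exp (-(T ^ 2 * (θstar - lam0) ^ 2) / 2) + g θstar + e₁)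
    (hD : D = ((1 - p₀) * Real.exp (-(T ^ 2 * Δ ^ 2) / 8) + e₁ + e₂) / p₀) :
    1 - D ≤ Real.exp (-(T ^ 2 * (θstar - lam0) ^ 2) / 2)
    ∧ (D ≤ 1 / 2 → |θstar - lam0| ≤ (1 / T) * Real.sqrt (2 * D * (1 + 1))) := by
  have hp0 : (0:ℝ) < p₀ := by linarith
  obtain ⟨hθ1, hθ2⟩ := hθ
  have hθabs : |θstar - lam0| ≤ Δ / 2 := by
    rw [abs_le]; constructor <;> linarith
  have hg0 := (hg lam0 (by simpa using (by positivity : (0:ℝ) ≤ Δ / 2))).1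
  have hgθ := (hg θstar hθabs).2
  set x : ℝ := (T ^ 2 * (θstar - lam0) ^ 2) / 2 with hx
  have hx0 : 0 ≤ x := by positivity
  have hE : -(T ^ 2 * (θstar - lam0) ^ 2) / 2 = -x := by rw [hx]; ring
  rw [hE] at hnear ⊢
  have hone : Real.exp (-(T ^ 2 * (lam0 - lam0) ^ 2) / 2) = 1 := by
    norm_num
  rw [hone] at hnear
  have hkey : 1 - Real.exp (-x) ≤ D := by
    rw [hD, le_div_iff₀ hp0]; nlinarith
  refine ⟨by linarith, fun hDhalf => ?_⟩
  -- bound x ≤ 2 D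
  have h1 : 1 + x ≤ Real.exp x := by linarith [Real.add_one_le_exp x]
  have h1x : (0:ℝ) < 1 + x := by linarith
  have hinv : Real.exp (-x) ≤ (1 + x)⁻¹ := by
    rw [Real.exp_neg]
    exact inv_anti₀ h1x h1
  have hxD : x ≤ 2 * D := by
    have h2 : 1 - (1 + x)⁻¹ ≤ D := by linarith
    have h3 : (1 + x) - 1 ≤ D * (1 + x) := by
      have := (div_le_iff₀ h1x).mp (by
        rw [div_eq_mul_inv]
        nlinarith [inv_nonneg.mpr h1x.le, mul_inv_cancel₀ h1x.ne'] : (1 + x - 1) / (1 + x) ≤ D)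
      linarith
    nlinarith
  have h4 : (θstar - lam0) ^ 2 ≤ (1 / T) ^ 2 * (2 * D * (1 + 1)) := by
    have hT2 : (0:ℝ) < T ^ 2 := by positivity
    rw [div_pow, one_pow, div_mul_eq_mul_div, le_div_iff₀ hT2]
    nlinarith
  calc |θstar - lam0| = Real.sqrt ((θstar - lam0) ^ 2) := (Real.sqrt_sq_eq_abs _).symm
    _ ≤ Real.sqrt ((1 / T) ^ 2 * (2 * D * (1 + 1))) := Real.sqrt_le_sqrt h4
    _ = (1 / T) * Real.sqrt (2 * D * (1 + 1)) := by
        rw [Real.sqrt_mul (sq_nonneg _), Real.sqrt_sq (by positivity)]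
end

section
/- Let p_0, p_1 ≥ 0 with p_0 + p_1 = 1 and p_0 > 1/2, let λ_0 < λ_1, and let G_α(x) = α/(π(α² + x²)) for α > 0. Then the function H(θ) = p_0 G_α(θ − λ_0) + p_1 G_α(θ − λ_1) satisfies H'(λ_0) = p_1 G_α'(λ_0 − λ_1) > 0 whenever p_1 > 0, so λ_0 is not a local maximum of H; in particular argmax H ≠ λ_0. -/
/-!
`λ₀` is the peak of its own Lorentzian, so that term contributes nothing to `H'(λ₀)`; what remains
is `p₁ G_α'(λ₀ - λ₁)`, positive because `G_α` is strictly increasing on `(-∞, 0)`. A local maximum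
of a differentiable function has vanishing derivative, so `λ₀` is not one.
-/

open Real

theorem hasDerivAt_lorentzian {α : ℝ} (hα : α ≠ 0) (x : ℝ) :
    HasDerivAt (fun x => α / (π * (α ^ 2 + x ^ 2)))
      (-(2 * α * x) / (π * (α ^ 2 + x ^ 2) ^ 2)) x := by
  have hden : HasDerivAt (fun x => π * (α ^ 2 + x ^ 2)) (π * (2 * x)) x := by
    simpa using ((hasDerivAt_pow 2 x).const_add (α ^ 2)).const_mul π
  refine ((hasDerivAt_const x α).fun_div hden (by positivity)).congr_deriv ?_
  field_simp
  ring

theorem lorentzian_deriv_pos_of_neg {α x : ℝ} (hα : 0 < α) (hx : x < 0) :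
    0 < -(2 * α * x) / (π * (α ^ 2 + x ^ 2) ^ 2) := by
  have : 0 < -(2 * α * x) := by nlinarith
  positivity

theorem hasDerivAt_mixture_sub {G G' : ℝ → ℝ} (hG : ∀ x, HasDerivAt G (G' x) x)
    (p₀ p₁ a b θ : ℝ) :
    HasDerivAt (fun θ => p₀ * G (θ - a) + p₁ * G (θ - b))
      (p₀ * G' (θ - a) + p₁ * G' (θ - b)) θ :=
  (((hG _).comp_sub_const θ a).const_mul p₀).add (((hG _).comp_sub_const θ b).const_mul p₁)

theorem stmt_17_general (α p₀ p₁ lam0 lam1 : ℝ) (hα : 0 < α)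
    (hp₁ : 0 < p₁)
    (hlam : lam0 < lam1)
    (G : ℝ → ℝ) (hG : ∀ x, G x = α / (Real.pi * (α ^ 2 + x ^ 2)))
    (H : ℝ → ℝ) (hH : ∀ θ, H θ = p₀ * G (θ - lam0) + p₁ * G (θ - lam1)) :
    deriv H lam0 = p₁ * deriv G (lam0 - lam1)
    ∧ 0 < deriv H lam0
    ∧ ¬ IsLocalMax H lam0 := by
  have hG' : ∀ x, HasDerivAt G (-(2 * α * x) / (π * (α ^ 2 + x ^ 2) ^ 2)) x := by
    rw [funext hG]
    exact hasDerivAt_lorentzian hα.ne'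
  have hH' : HasDerivAt H (p₁ * (-(2 * α * (lam0 - lam1)) / (π * (α ^ 2 + (lam0 - lam1) ^ 2) ^ 2)))
      lam0 := by
    rw [funext hH]
    simpa using hasDerivAt_mixture_sub hG' p₀ p₁ lam0 lam1 lam0
  have hderiv : deriv H lam0 = p₁ * deriv G (lam0 - lam1) := by
    rw [hH'.deriv, (hG' _).deriv]
  have hpos : 0 < deriv H lam0 := by
    rw [hH'.deriv]
    exact mul_pos hp₁ (lorentzian_deriv_pos_of_neg hα (sub_neg.2 hlam))
  exact ⟨hderiv, hpos, fun hmax => hpos.ne' hmax.deriv_eq_zero⟩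

/-- The Lorentzian mixture `H(θ) = p₀ G_α(θ - λ₀) + p₁ G_α(θ - λ₁)` with
`G_α(x) = α/(π(α² + x²))`, `p₀ + p₁ = 1`, `p₀ > 1/2 > p₁ > 0`, `λ₀ < λ₁`, satisfies
`H'(λ₀) = p₁ G_α'(λ₀ - λ₁) > 0`; in particular `λ₀` is not a local maximum of `H`. -/
theorem stmt_17 (α p₀ p₁ lam0 lam1 : ℝ) (hα : 0 < α)
    (hp₀ : 0 ≤ p₀) (hp₁ : 0 < p₁) (hsum : p₀ + p₁ = 1) (hp : 1 / 2 < p₀)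
    (hlam : lam0 < lam1)
    (G : ℝ → ℝ) (hG : ∀ x, G x = α / (Real.pi * (α ^ 2 + x ^ 2)))
    (H : ℝ → ℝ) (hH : ∀ θ, H θ = p₀ * G (θ - lam0) + p₁ * G (θ - lam1)) :
    deriv H lam0 = p₁ * deriv G (lam0 - lam1)
    ∧ 0 < deriv H lam0
    ∧ ¬ IsLocalMax H lam0 :=
  stmt_17_general α p₀ p₁ lam0 lam1 hα hp₁ hlam G hG H hH
end
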